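/- arXiv:1910.06442 — 6 statements merged into one kernel-verified Lean document; each statement's English description precedes it below -/
import Mathlib

section
/- Let G be a biconnected loopless multigraph with at least two vertices whose Jacobian Jac(G) is the trivial group. Then G has exactly two vertices, joined by exactly one edge (i.e., w(u,v) = 1 for the two distinct vertices u, v). -/
open Finset

variable {V : Type*}

/-- Degree of a vertex in the loopless multigraph with edge-multiplicity function `w`. -/
def mgDeg [Fintype V] (w : V → V → ℕ) (v : V) : ℕ := ∑ u, w v u

/-- The Laplacian of the multigraph, as an additive homomorphism on `V → ℤ`. -/
def mgLap [Fintype V] (w : V → V → ℕ) : (V → ℤ) →+ (V → ℤ) :=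
  AddMonoidHom.mk' (fun f v => (mgDeg w v : ℤ) * f v - ∑ u, (w v u : ℤ) * f u)
    (by
      intro f g
      funext v
      simp [mul_add, Finset.sum_add_distrib]
      ring)

/-- The group `Div⁰(G)` of divisors of degree zero. -/
def mgDiv0 (V : Type*) [Fintype V] : AddSubgroup (V → ℤ) :=
  AddMonoidHom.ker
    (AddMonoidHom.mk' (fun D : V → ℤ => ∑ v, D v)
      (by intro a b; simp [Finset.sum_add_distrib]))

/-- The group `Prin(G)` of principal divisors, the image of the Laplacian. -/
def mgPrin [Fintype V] (w : V → V → ℕ) : AddSubgroup (V → ℤ) := (mgLap w).range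

/-- The Jacobian `Jac(G) = Div⁰(G)/Prin(G)`. -/
abbrev mgJac (V : Type*) [Fintype V] (w : V → V → ℕ) : Type _ :=
  mgDiv0 V ⧸ ((mgPrin w).addSubgroupOf (mgDiv0 V))

/-- The underlying simple graph: `u` adjacent to `v` iff `u ≠ v` and `w u v > 0`. -/
def mgUnderlying (w : V → V → ℕ) : SimpleGraph V :=
  SimpleGraph.fromRel (fun u v => 0 < w u v)

/-- `G` is biconnected: connected, and removing any vertex leaves a connected graph. -/
def mgBiconnected [Fintype V] (w : V → V → ℕ) : Prop :=
  (mgUnderlying w).Connected ∧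
    ∀ x : V, ((mgUnderlying w).induce ({x}ᶜ : Set V)).Connected

section Aux

lemma walkProp {α : Type*} {G : SimpleGraph α} {P : α → Prop}
    (h : ∀ a b, P a → G.Adj a b → P b) {x y : α} (p : G.Walk x y) (hx : P x) : P y := by
  induction p with
  | nil => exact hx
  | cons h' p ih => exact ih (h _ _ hx h')

lemma walkAdj {α : Type*} {G : SimpleGraph α} {x y : α} (p : G.Walk x y) (h : x ≠ y) :
    ∃ z, G.Adj x z := by
  cases p with
  | nil => exact absurd rfl h
  | cons h' _ => exact ⟨_, h'⟩

lemma lap_apply {V : Type*} [Fintype V] (w : V → V → ℕ) (f : V → ℤ) (a : V) :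
    mgLap w f a = ∑ y, (w a y : ℤ) * (f a - f y) := by
  simp only [mgLap, AddMonoidHom.mk'_apply, mgDeg]
  push_cast
  rw [Finset.sum_mul, ← Finset.sum_sub_distrib]
  exact Finset.sum_congr rfl fun y _ => (mul_sub _ _ _).symm

end Aux


/-- a biconnected loopless multigraph on at least two vertices with trivial
Jacobian has exactly two vertices joined by exactly one edge. -/
theorem stmt2 (V : Type*) [Fintype V] [DecidableEq V] [Nontrivial V] (w : V → V → ℕ)
    (hsym : ∀ u v, w u v = w v u) (hloop : ∀ v, w v v = 0)
    (hbic : mgBiconnected w)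
    (htriv : ∀ x : mgJac V w, x = 0) :
    ∃ u v : V, u ≠ v ∧ (∀ x : V, x = u ∨ x = v) ∧ w u v = 1 := by

  classical
  -- adjacency in the underlying graph gives positive weight
  have hadjw : ∀ {a b : V}, (mgUnderlying w).Adj a b → a ≠ b ∧ 0 < w a b := by
    intro a b h
    rw [mgUnderlying, SimpleGraph.fromRel_adj] at h
    exact ⟨h.1, h.2.elim id fun h' => (hsym a b) ▸ h'⟩
  -- find an adjacent pair u, v
  obtain ⟨a, b, hab⟩ := exists_pair_ne V
  obtain ⟨p⟩ := hbic.1.preconnected a b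
  obtain ⟨v, hadj⟩ := walkAdj p hab
  set u := a with hu_def
  have huv : u ≠ v := (hadjw hadj).1
  have hwuv : 0 < w u v := (hadjw hadj).2
  -- the divisor δ_u - δ_v
  set D : V → ℤ := fun x => (if x = u then 1 else 0) - (if x = v then 1 else 0) with hD_def
  have hD0 : D ∈ mgDiv0 V := by
    simp [mgDiv0, AddMonoidHom.mem_ker, hD_def, Finset.sum_sub_distrib]
  -- D is principal
  obtain ⟨f, hf⟩ : ∃ f, mgLap w f = D := by
    have h1 := htriv (QuotientAddGroup.mk ⟨D, hD0⟩)
    have h2 := (QuotientAddGroup.eq_zero_iff _).mp h1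
    rw [AddSubgroup.mem_addSubgroupOf] at h2
    exact h2
  have hfx : ∀ x, ∑ y, (w x y : ℤ) * (f x - f y) = D x := by
    intro x; rw [← lap_apply, hf]
  -- choose a maximum of f
  obtain ⟨x0, -, hx0⟩ := Finset.exists_max_image Finset.univ f ⟨u, Finset.mem_univ u⟩
  -- maximum principle step
  have key : ∀ x, f x = f x0 → x ≠ u → ∀ y, 0 < w x y → f y = f x0 := by
    intro x hx hxu y hy
    have hDx : D x ≤ 0 := by
      simp only [hD_def, if_neg hxu]
      split <;> norm_num
    have hnn : ∀ z ∈ Finset.univ, (0:ℤ) ≤ (w x z : ℤ) * (f x - f z) := by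
      intro z _
      have := hx0 z (Finset.mem_univ z)
      have hxz : 0 ≤ f x - f z := by rw [hx]; linarith
      positivity
    have hsum0 : ∑ z, (w x z : ℤ) * (f x - f z) = 0 :=
      le_antisymm (by rw [hfx x]; exact hDx) (Finset.sum_nonneg hnn)
    have hz := (Finset.sum_eq_zero_iff_of_nonneg hnn).mp hsum0 y (Finset.mem_univ y)
    have hwy : (w x y : ℤ) ≠ 0 := by exact_mod_cast hy.ne'
    have : f x - f y = 0 := by
      rcases mul_eq_zero.mp hz with h | h
      · exact absurd h hwy
      · exact h
    have := hx0 y (Finset.mem_univ y)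
    linarith [hx ▸ this]
  -- u is a maximum
  have hu : f u = f x0 := by
    by_contra hne
    obtain ⟨q⟩ := hbic.1.preconnected x0 u
    exact hne (walkProp (P := fun z => f z = f x0)
      (fun a' b' ha' hadj' => key a' ha' (fun h => hne (h ▸ ha')) b' (hadjw hadj').2) q rfl)
  -- u is the unique maximum
  have honly : ∀ x, x ≠ u → f x ≠ f x0 := by
    intro x hxu hx
    have hallmax : ∀ z : ({u}ᶜ : Set V), f z.val = f x0 := by
      intro z
      obtain ⟨q⟩ := (hbic.2 u).preconnected ⟨x, hxu⟩ z
      exact walkProp (P := fun z : ({u}ᶜ : Set V) => f z.val = f x0)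
        (fun a' b' ha' hadj' => key a'.val ha' a'.2 b'.val (hadjw hadj').2) q hx
    have hconst : ∀ z, f z = f x0 := by
      intro z
      by_cases h : z = u
      · rw [h]; exact hu
      · exact hallmax ⟨z, h⟩
    have h1 : ∑ z, (w u z : ℤ) * (f u - f z) = D u := hfx u
    rw [Finset.sum_eq_zero (fun z _ => by rw [hconst z, hconst u]; ring)] at h1
    simp [hD_def, huv] at h1
  -- degree bound at u
  have hsum1 : ∑ z, (w u z : ℤ) * (f u - f z) = 1 := by
    rw [hfx u]; simp [hD_def, huv]
  have hterm : ∀ z ∈ Finset.univ, (w u z : ℤ) ≤ (w u z : ℤ) * (f u - f z) := by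
    intro z _
    by_cases hz : w u z = 0
    · simp [hz]
    · have hzu : z ≠ u := by
        intro h; rw [h, hloop] at hz; exact hz rfl
      have h1 : f z ≠ f x0 := honly z hzu
      have h2 : f z ≤ f x0 := hx0 z (Finset.mem_univ z)
      have h3 : (1:ℤ) ≤ f u - f z := by rw [hu]; omega
      nlinarith [Nat.cast_nonneg (α := ℤ) (w u z)]
  have hdegZ : ∑ z, (w u z : ℤ) ≤ 1 := by
    calc ∑ z, (w u z : ℤ) ≤ ∑ z, (w u z : ℤ) * (f u - f z) := Finset.sum_le_sum hterm
    _ = 1 := hsum1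
  have hdeg : ∑ z, w u z ≤ 1 := by exact_mod_cast hdegZ
  have hrest : ∀ z, z ≠ v → w u z = 0 := by
    intro z hz
    have hsplit := Finset.add_sum_erase Finset.univ (w u) (Finset.mem_univ v)
    have hzmem : z ∈ Finset.univ.erase v := Finset.mem_erase.mpr ⟨hz, Finset.mem_univ z⟩
    have := Finset.single_le_sum (f := w u) (fun i _ => Nat.zero_le _) hzmem
    omega
  have hwuv1 : w u v = 1 := by
    have hsplit := Finset.add_sum_erase Finset.univ (w u) (Finset.mem_univ v)
    have : ∑ z ∈ Finset.univ.erase v, w u z = 0 :=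
      Finset.sum_eq_zero fun z hz => hrest z (Finset.mem_erase.mp hz).1
    omega
  refine ⟨u, v, huv, ?_, hwuv1⟩
  intro x
  by_contra hx
  push_neg at hx
  obtain ⟨hxu, hxv⟩ := hx
  have huc : u ∈ ({v}ᶜ : Set V) := huv
  have hxc : x ∈ ({v}ᶜ : Set V) := hxv
  obtain ⟨q⟩ := (hbic.2 v).preconnected ⟨u, huc⟩ ⟨x, hxc⟩
  have hne : (⟨u, huc⟩ : ({v}ᶜ : Set V)) ≠ ⟨x, hxc⟩ := by
    intro h; exact hxu (congrArg Subtype.val h).symm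
  obtain ⟨z, hz⟩ := walkAdj q hne
  have hadj' : (mgUnderlying w).Adj u z.val := hz
  have := (hadjw hadj').2
  have hz0 := hrest z.val z.2
  omega
end

section
/- Let G be a biconnected loopless multigraph with at least two vertices whose Jacobian Jac(G) has exponent 2. Then G is the graph C₂: it has exactly two vertices, joined by exactly two edges (i.e., w(u,v) = 2 for the two distinct vertices u, v). -/
open Finset

variable {V : Type*}

lemma mgLap_apply [Fintype V] (w : V → V → ℕ) (f : V → ℤ) (x : V) :
    mgLap w f x = ∑ u, (w x u : ℤ) * (f x - f u) := by
  simp [mgLap, mgDeg, mul_sub, Finset.sum_sub_distrib, Finset.sum_mul]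

lemma mg_max_only [Fintype V] (w : V → V → ℕ) (hsym : ∀ u v, w u v = w v u)
    (u v : V) (hvu : v ≠ u)
    (hconn : ((mgUnderlying w).induce ({u}ᶜ : Set V)).Connected)
    (f D : V → ℤ) (hLf : mgLap w f = D)
    (hDv : D v < 0) (hD0 : ∀ x, x ≠ u → x ≠ v → D x = 0) :
    ∀ x, x ≠ u → f x < f u := by
  obtain ⟨m, -, hm⟩ := Finset.exists_max_image Finset.univ f ⟨u, Finset.mem_univ u⟩
  have hm' : ∀ x, f x ≤ f m := fun x => hm x (Finset.mem_univ x)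
  have key : ∀ x : V, x ≠ u → f x = f m → False := by
    intro x hx hfx
    set G' := (mgUnderlying w).induce ({u}ᶜ : Set V) with hG'
    have hxmem : x ∈ ({u}ᶜ : Set V) := hx
    have hvmem : v ∈ ({u}ᶜ : Set V) := hvu
    obtain ⟨p⟩ := hconn.preconnected ⟨x, hxmem⟩ ⟨v, hvmem⟩
    have hvcase : ∀ y : V, f y = f m → y ≠ v := by
      intro y hy hyv
      subst hyv
      have h1 : (0 : ℤ) ≤ D y := by
        rw [← hLf, mgLap_apply]
        exact Finset.sum_nonneg fun z _ =>
          mul_nonneg (Int.natCast_nonneg _) (by rw [hy]; exact sub_nonneg.2 (hm' z))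
      omega
    suffices H : ∀ (a b : ({u}ᶜ : Set V)) (p : G'.Walk a b), b.1 = v → f a.1 = f m → False from
      H ⟨x, hxmem⟩ ⟨v, hvmem⟩ p rfl hfx
    intro a b p
    induction p with
    | nil =>
        exact fun hbv hfa => hvcase _ hfa hbv
    | @cons s t e h p ih =>
        intro hbv hfa
        have hanev : s.1 ≠ v := hvcase s.1 hfa
        have hDa : D s.1 = 0 := hD0 s.1 s.2 hanev
        have hsum : ∑ z, (w s.1 z : ℤ) * (f s.1 - f z) = 0 := by
          rw [← mgLap_apply, hLf, hDa]
        have hterms := (Finset.sum_eq_zero_iff_of_nonneg (fun z _ =>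
          mul_nonneg (Int.natCast_nonneg _) (by rw [hfa]; exact sub_nonneg.2 (hm' z)))).1 hsum
        have hadj : (mgUnderlying w).Adj s.1 t.1 := h
        rw [mgUnderlying, SimpleGraph.fromRel_adj] at hadj
        have hwpos : 0 < w s.1 t.1 := by
          rcases hadj.2 with h' | h'
          · exact h'
          · rw [hsym]; exact h'
        have hb := hterms t.1 (Finset.mem_univ _)
        have hfb : f t.1 = f m := by
          rcases mul_eq_zero.1 hb with h' | h'
          · exact absurd h' (by positivity)
          · rw [← hfa]; omega
        exact ih hbv hfb
  have hmu : m = u := by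
    by_contra hmu
    exact key m hmu rfl
  intro x hx
  rcases lt_or_eq_of_le (hm' x) with h | h
  · rw [hmu] at h; exact h
  · exact absurd h (fun h' => key x hx h')

/-- a biconnected loopless multigraph on at least two vertices whose Jacobian has
exponent 2 is the graph C₂: two vertices joined by exactly two edges. -/
theorem stmt3 (V : Type*) [Fintype V] [DecidableEq V] [Nontrivial V] (w : V → V → ℕ)
    (hsym : ∀ u v, w u v = w v u) (hloop : ∀ v, w v v = 0)
    (hbic : mgBiconnected w)
    (hexp : AddMonoid.exponent (mgJac V w) = 2) :
    ∃ u v : V, u ≠ v ∧ (∀ x : V, x = u ∨ x = v) ∧ w u v = 2 := by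
  classical
  -- find an adjacent pair
  obtain ⟨u, v, huv0⟩ : ∃ u v : V, (mgUnderlying w).Adj u v := by
    obtain ⟨a, b, hab⟩ := exists_pair_ne V
    obtain ⟨p⟩ := hbic.1.preconnected a b
    cases p with
    | nil => exact absurd rfl hab
    | cons h _ => exact ⟨_, _, h⟩
  have huv : u ≠ v := huv0.ne
  have hvu : v ≠ u := huv.symm
  have hwuv : 0 < w u v := by
    rw [mgUnderlying, SimpleGraph.fromRel_adj] at huv0
    rcases huv0.2 with h | h
    · exact h
    · rw [hsym]; exact h
  -- the divisor 2(δ_u - δ_v) is principal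
  set d : V → ℤ := fun x => (if x = u then 1 else 0) - (if x = v then 1 else 0) with hd_def
  have hd : d ∈ mgDiv0 V := by
    simp [mgDiv0, AddMonoidHom.mem_ker, hd_def, Finset.sum_sub_distrib]
  have hdu : d u = 1 := by simp [hd_def, huv]
  have hdv : d v = -1 := by simp [hd_def, hvu]
  have hd0 : ∀ x, x ≠ u → x ≠ v → d x = 0 := by
    intro x hxu hxv; simp [hd_def, hxu, hxv]
  obtain ⟨f, hf⟩ : ∃ f : V → ℤ, mgLap w f = fun x => 2 * d x := by
    have h2 : (2 : ℕ) • (QuotientAddGroup.mk (⟨d, hd⟩ : mgDiv0 V) : mgJac V w) = 0 := by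
      rw [← hexp]; exact AddMonoid.exponent_nsmul_eq_zero _
    rw [← QuotientAddGroup.mk_nsmul, QuotientAddGroup.eq_zero_iff,
      AddSubgroup.mem_addSubgroupOf] at h2
    obtain ⟨f, hf⟩ := h2
    refine ⟨f, ?_⟩
    have h3 : ((2 • (⟨d, hd⟩ : mgDiv0 V) : mgDiv0 V) : V → ℤ) = fun x => 2 * d x := by
      funext x; simp [two_smul, two_mul]
    rw [← h3]; exact hf
  by_cases htwo : ∀ x : V, x = u ∨ x = v
  · -- two-vertex case
    have huniv : (Finset.univ : Finset V) = {u, v} := by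
      ext x
      simpa using htwo x
    have hsum2 : ∀ g : V → ℤ, ∑ x, g x = g u + g v := by
      intro g; rw [huniv, Finset.sum_pair huv]
    have hequ : (w u v : ℤ) * (f u - f v) = 2 := by
      have h := congrFun hf u
      rw [mgLap_apply, hsum2] at h
      simpa [hdu] using h
    -- rule out w u v = 1
    have hne1 : w u v ≠ 1 := by
      intro h1
      have hprin : ∀ D : V → ℤ, D ∈ mgDiv0 V → D ∈ mgPrin w := by
        intro D hD
        have hsumD : D u + D v = 0 := by
          have h' : ∑ x, D x = 0 := hD
          rwa [hsum2] at h'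
        refine ⟨fun x => if x = u then D u else 0, ?_⟩
        funext x
        rw [mgLap_apply, hsum2]
        rcases htwo x with h | h <;> rw [h]
        · simp [huv, hvu, h1]
        · simp [huv, hvu, hsym v u, h1, hloop]
          omega
      have hsub : Subsingleton (mgJac V w) := by
        constructor
        intro a b
        obtain ⟨⟨a, ha⟩, rfl⟩ := QuotientAddGroup.mk_surjective a
        obtain ⟨⟨b, hb⟩, rfl⟩ := QuotientAddGroup.mk_surjective b
        rw [QuotientAddGroup.eq]
        exact AddSubgroup.mem_addSubgroupOf.2 (by
          simpa using hprin _ (AddSubgroup.add_mem _ (AddSubgroup.neg_mem _ ha) hb))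
      rw [AddMonoid.exp_eq_one_of_subsingleton] at hexp
      omega
    -- w u v divides 2
    have hdvd : w u v ∣ 2 := by
      have h' : (w u v : ℤ) ∣ 2 := ⟨f u - f v, hequ.symm⟩
      exact_mod_cast h'
    rcases (Nat.dvd_prime Nat.prime_two).1 hdvd with h | h
    · exact absurd h hne1
    · exact ⟨u, v, huv, htwo, h⟩
  · -- at least three vertices: contradiction
    exfalso
    push_neg at htwo
    obtain ⟨x₀, hx₀u, hx₀v⟩ := htwo
    have hmax := mg_max_only w hsym u v hvu (hbic.2 u) f _ hf
      (show 2 * d v < 0 by rw [hdv]; norm_num)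
      (fun x hxu hxv => show 2 * d x = 0 by rw [hd0 x hxu hxv]; ring)
    have hmin := mg_max_only w hsym v u huv (hbic.2 v) (-f) (fun x => -(2 * d x))
      (by rw [map_neg, hf]; rfl)
      (show -(2 * d u) < 0 by rw [hdu]; norm_num)
      (fun x hxv hxu => show -(2 * d x) = 0 by rw [hd0 x hxu hxv]; ring)
    have hfx₀u := hmax x₀ hx₀u
    have hfx₀v : f v < f x₀ := by
      have h := hmin x₀ hx₀v
      simp only [Pi.neg_apply, neg_lt_neg_iff] at h
      exact h
    have hgap : f u - f v ≥ 2 := by omega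
    -- find a neighbor of u other than v
    obtain ⟨y₀, hy₀v, hy₀adj⟩ : ∃ y₀ : V, y₀ ≠ v ∧ (mgUnderlying w).Adj u y₀ := by
      have humem : u ∈ ({v}ᶜ : Set V) := huv
      have hx₀mem : x₀ ∈ ({v}ᶜ : Set V) := hx₀v
      obtain ⟨p⟩ := (hbic.2 v).preconnected ⟨u, humem⟩ ⟨x₀, hx₀mem⟩
      cases p with
      | nil => exact absurd rfl hx₀u
      | cons h _ =>
          rename_i t _
          exact ⟨t.1, t.2, h⟩
    have hwy₀ : 0 < w u y₀ := by
      rw [mgUnderlying, SimpleGraph.fromRel_adj] at hy₀adj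
      rcases hy₀adj.2 with h | h
      · exact h
      · rw [hsym]; exact h
    have hy₀u : y₀ ≠ u := by
      rw [mgUnderlying, SimpleGraph.fromRel_adj] at hy₀adj
      exact hy₀adj.1.symm
    -- evaluate the Laplacian at u
    have hLu : ∑ z, (w u z : ℤ) * (f u - f z) = 2 := by
      rw [← mgLap_apply, hf]
      show 2 * d u = 2
      rw [hdu]; ring
    have hsub : ({v, y₀} : Finset V) ⊆ Finset.univ := Finset.subset_univ _
    have hnonneg : ∀ z ∈ Finset.univ, z ∉ ({v, y₀} : Finset V) →
        0 ≤ (w u z : ℤ) * (f u - f z) := by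
      intro z _ _
      rcases eq_or_ne z u with rfl | hz
      · simp
      · exact mul_nonneg (Int.natCast_nonneg _) (by have := hmax z hz; omega)
    have hge := Finset.sum_le_sum_of_subset_of_nonneg hsub hnonneg
    rw [Finset.sum_pair hy₀v.symm, hLu] at hge
    have h1 : (1 : ℤ) ≤ (w u v : ℤ) := by exact_mod_cast hwuv
    have h2 : (1 : ℤ) ≤ (w u y₀ : ℤ) := by exact_mod_cast hwy₀
    have h3 : (1 : ℤ) ≤ f u - f y₀ := by have := hmax y₀ hy₀u; omega
    nlinarith [mul_le_mul h1 hgap (by norm_num) (Int.natCast_nonneg (w u v)),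
      mul_le_mul h2 h3 (by norm_num) (Int.natCast_nonneg (w u y₀))]
end

section
/- Let D be a totally unimodular real m×n matrix such that no index i is a coloop (e_i ∉ B for every i), and suppose that 2x ∈ B_I for every x ∈ B_I^#. Then every entry of the orthogonal projection matrix P onto the cut space B lies in the set {−1/2, 0, 1/2}. -/
open Matrix

variable {m n : ℕ}

/-- The cycle space `Z = ker D`. -/
def cycleSpace (D : Matrix (Fin m) (Fin n) ℝ) : Submodule ℝ (Fin n → ℝ) :=
  LinearMap.ker D.mulVecLin

/-- The cut space `B = Z^⊥`, the orthogonal complement of the cycle space with respect to the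
standard inner product on `ℝⁿ`. -/
def cutSpace (D : Matrix (Fin m) (Fin n) ℝ) : Submodule ℝ (Fin n → ℝ) where
  carrier := {x | ∀ z ∈ cycleSpace D, x ⬝ᵥ z = 0}
  add_mem' := by
    intro a b ha hb z hz
    simp [add_dotProduct, ha z hz, hb z hz]
  zero_mem' := by
    intro z hz
    simp
  smul_mem' := by
    intro c a ha z hz
    simp [smul_dotProduct, ha z hz]

/-- The cycle lattice `Z_I = Z ∩ ℤⁿ`. -/
def cycleLattice (D : Matrix (Fin m) (Fin n) ℝ) : Set (Fin n → ℝ) :=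
  {x | x ∈ cycleSpace D ∧ ∀ i, ∃ k : ℤ, x i = (k : ℝ)}

/-- The cut lattice `B_I = B ∩ ℤⁿ`. -/
def cutLattice (D : Matrix (Fin m) (Fin n) ℝ) : Set (Fin n → ℝ) :=
  {x | x ∈ cutSpace D ∧ ∀ i, ∃ k : ℤ, x i = (k : ℝ)}

/-- The dual lattice `B_I^# = {x ∈ B : ⟨x,b⟩ ∈ ℤ for all b ∈ B_I}`. -/
def dualLattice (D : Matrix (Fin m) (Fin n) ℝ) : Set (Fin n → ℝ) :=
  {x | x ∈ cutSpace D ∧ ∀ b ∈ cutLattice D, ∃ k : ℤ, x ⬝ᵥ b = (k : ℝ)}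

/-- `P` is the orthogonal projection matrix onto the cut space `B`: `Px ∈ B` and
`x - Px ∈ B^⊥ = Z` for every `x`. -/
def IsCutProjection (D : Matrix (Fin m) (Fin n) ℝ) (P : Matrix (Fin n) (Fin n) ℝ) : Prop :=
  ∀ x : Fin n → ℝ, P.mulVec x ∈ cutSpace D ∧ x - P.mulVec x ∈ cycleSpace D

/-- if `D` is totally unimodular with no coloops, and `2x ∈ B_I` for all
`x ∈ B_I^#`, then every entry of the orthogonal projection onto the cut space is
`-1/2`, `0`, or `1/2`. -/
theorem stmt6 (m n : ℕ) (D : Matrix (Fin m) (Fin n) ℝ)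
    (hTU : D.IsTotallyUnimodular)
    (hcoloop : ∀ i : Fin n, Pi.single i (1 : ℝ) ∉ cutSpace D)
    (hexp : ∀ x ∈ dualLattice D, (2 : ℝ) • x ∈ cutLattice D)
    (P : Matrix (Fin n) (Fin n) ℝ) (hP : IsCutProjection D P) :
    ∀ i j : Fin n, P i j = -(1/2) ∨ P i j = 0 ∨ P i j = 1/2 := by
  -- column j of P
  set c : Fin n → (Fin n → ℝ) := fun j => P.mulVec (Pi.single j 1) with hc
  have hcol : ∀ j i, c j i = P i j := by
    intro j i
    simp [hc, Matrix.mulVec_single]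
  -- each column is in the dual lattice
  have hdual : ∀ j, c j ∈ dualLattice D := by
    intro j
    refine ⟨(hP _).1, ?_⟩
    intro b hb
    obtain ⟨hbB, hbZ⟩ := hb
    have h0 : b ⬝ᵥ (Pi.single j 1 - c j) = 0 := hbB _ ((hP _).2)
    rw [dotProduct_sub, sub_eq_zero] at h0
    obtain ⟨k, hk⟩ := hbZ j
    refine ⟨k, ?_⟩
    rw [dotProduct_comm, ← h0]
    simpa using hk
  -- entries of 2 • c j are integers
  have h2 : ∀ i j : Fin n, ∃ k : ℤ, 2 * P i j = (k : ℝ) := by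
    intro i j
    obtain ⟨-, hint⟩ := hexp (c j) (hdual j)
    obtain ⟨k, hk⟩ := hint i
    refine ⟨k, ?_⟩
    simpa [hcol j i] using hk
  -- P i j = c i ⬝ᵥ c j
  have hPij : ∀ i j : Fin n, P i j = c i ⬝ᵥ c j := by
    intro i j
    have h0 : c j ⬝ᵥ (Pi.single i 1 - c i) = 0 := (hP _).1 _ ((hP _).2)
    rw [dotProduct_sub, sub_eq_zero] at h0
    rw [dotProduct_comm, ← h0]
    simpa using (hcol j i).symm
  -- diagonal entries are < 1
  have hdiag_lt : ∀ j : Fin n, P j j < 1 := by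
    intro j
    by_contra h
    push_neg at h
    have hd : (Pi.single j 1 - c j) ⬝ᵥ (Pi.single j 1 - c j) = 1 - P j j := by
      have e1 : (Pi.single j (1:ℝ)) ⬝ᵥ (Pi.single j 1) = 1 := by simp
      have e2 : (Pi.single j (1:ℝ)) ⬝ᵥ c j = P j j := by
        simpa [hcol j j] using (single_dotProduct (1:ℝ) (c j) j)
      have e3 : c j ⬝ᵥ (Pi.single j (1:ℝ)) = P j j := by
        simpa [hcol j j] using (dotProduct_single (c j) (1:ℝ) j)
      have e4 : c j ⬝ᵥ c j = P j j := (hPij j j).symm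
      rw [dotProduct_sub, sub_dotProduct, sub_dotProduct, e1, e2, e3, e4]
      ring
    have hnn : 0 ≤ (Pi.single j 1 - c j) ⬝ᵥ (Pi.single j 1 - c j) :=
      Finset.sum_nonneg (fun k _ => mul_self_nonneg _)
    have hz : (Pi.single j 1 - c j) ⬝ᵥ (Pi.single j 1 - c j) = 0 := le_antisymm (by rw [hd]; linarith) hnn
    have hzero : Pi.single j (1:ℝ) - c j = 0 := by
      rwa [dotProduct_self_eq_zero] at hz
    have : Pi.single j (1:ℝ) = c j := by
      have := sub_eq_zero.mp hzero; exact this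
    exact hcoloop j (this ▸ (hP (Pi.single j 1)).1)
  -- diagonal entries are nonneg and ≤ 1/2
  have hdiag_nonneg : ∀ j : Fin n, 0 ≤ P j j := by
    intro j
    rw [hPij j j]
    exact Finset.sum_nonneg (fun k _ => mul_self_nonneg _)
  have hdiag_half : ∀ j : Fin n, P j j ≤ 1/2 := by
    intro j
    obtain ⟨k, hk⟩ := h2 j j
    have hk0 : (0:ℤ) ≤ k := by
      have : (0:ℝ) ≤ (k:ℝ) := by rw [← hk]; linarith [hdiag_nonneg j]
      exact_mod_cast this
    have hk2 : k < 2 := by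
      have : (k:ℝ) < 2 := by rw [← hk]; linarith [hdiag_lt j]
      exact_mod_cast this
    have : (k:ℝ) ≤ 1 := by exact_mod_cast Int.lt_add_one_iff.mp hk2
    linarith [hk ▸ this]
  -- off-diagonal bound via (c i ∓ c j) self dot product
  intro i j
  have key : ∀ s : ℝ, s = 1 ∨ s = -1 → 0 ≤ P i i - 2 * s * P i j + P j j := by
    intro s hs
    have hnn : 0 ≤ (c i - s • c j) ⬝ᵥ (c i - s • c j) :=
      Finset.sum_nonneg (fun k _ => mul_self_nonneg _)
    have expand : (c i - s • c j) ⬝ᵥ (c i - s • c j)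
        = P i i - s * (c i ⬝ᵥ c j) - s * (c j ⬝ᵥ c i) + s * s * P j j := by
      rw [dotProduct_sub, sub_dotProduct, sub_dotProduct, dotProduct_smul, smul_dotProduct,
        dotProduct_smul, smul_dotProduct, ← hPij i i, ← hPij j j]
      simp [smul_eq_mul]; ring
    have hcomm : c j ⬝ᵥ c i = c i ⬝ᵥ c j := dotProduct_comm _ _
    have hs2 : s * s = 1 := by rcases hs with h | h <;> rw [h] <;> ring
    rw [expand, hcomm, ← hPij i j, hs2] at hnn
    linarith
  have hub : 2 * P i j ≤ 1 := by
    have := key 1 (Or.inl rfl)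
    linarith [hdiag_half i, hdiag_half j]
  have hlb : -1 ≤ 2 * P i j := by
    have := key (-1) (Or.inr rfl)
    linarith [hdiag_half i, hdiag_half j]
  obtain ⟨k, hk⟩ := h2 i j
  have hk1 : k ≤ 1 := by
    have : (k:ℝ) ≤ 1 := hk ▸ hub
    exact_mod_cast this
  have hkm1 : -1 ≤ k := by
    have : (-1:ℝ) ≤ (k:ℝ) := hk ▸ hlb
    exact_mod_cast this
  interval_cases k
  · left; push_cast at hk; linarith
  · right; left; push_cast at hk; linarith
  · right; right; push_cast at hk; linarith
end

section
/- Let D be a totally unimodular real m×n matrix such that no index i is a loop (De_i ≠ 0 for every i) and no index i is a coloop (e_i ∉ B for every i), and suppose that 2x ∈ B_I for every x ∈ B_I^#. Then the columns of D pair up, equal up to sign: for every index i there exists a unique index j ≠ i such that De_i = De_j or De_i = −De_j. -/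
open Matrix

variable {m n : ℕ}

/-! Let `p` be the orthogonal projection of `e_i` onto `B`. Since `⟨p, b⟩ = b_i` for `b ∈ B`, `p`
lies in `B_I^#`, so `2p` is integral. Moreover `|p|² = p_i`, and the absence of loops and coloops
gives `0 < p_i < 1`; hence `2p_i = 1` and `|2p|² = 2`, so `2p = e_i ± e_j` for a single `j ≠ i`.
As `e_i - p ∈ ker D`, this says `De_i = ±De_j`. Conversely `De_i = ±De_k` puts `e_i ∓ e_k` in
`Z = B^⊥`, so `p_k = ±p_i ≠ 0` and `k = j`. -/

open Finset

lemma exists_sq_eq_one_of_sum_sq_eq_one {ι : Type*} [DecidableEq ι] {s : Finset ι} {c : ι → ℤ}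
    (h : ∑ k ∈ s, c k ^ 2 = 1) : ∃ j ∈ s, c j ^ 2 = 1 ∧ ∀ k ∈ s, k ≠ j → c k = 0 := by
  obtain ⟨j, hjs, hcj⟩ : ∃ j ∈ s, c j ≠ 0 := by
    by_contra! hzero
    have : ∑ k ∈ s, c k ^ 2 = 0 := sum_eq_zero fun k hk => by simp [hzero k hk]
    omega
  have hsplit := add_sum_erase s (fun k => c k ^ 2) hjs
  have hrest_nonneg : 0 ≤ ∑ k ∈ s.erase j, c k ^ 2 := sum_nonneg fun k _ => sq_nonneg (c k)
  have hcj_sq : 1 ≤ c j ^ 2 := by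
    have := sq_pos_of_ne_zero hcj
    omega
  have hrest : ∑ k ∈ s.erase j, c k ^ 2 = 0 := by omega
  refine ⟨j, hjs, by omega, fun k hks hkj => ?_⟩
  rw [sum_eq_zero_iff_of_nonneg fun k _ => sq_nonneg (c k)] at hrest
  exact pow_eq_zero_iff two_ne_zero |>.mp (hrest k (mem_erase.mpr ⟨hkj, hks⟩))

lemma exists_eq_single_add_single_of_sum_sq_eq_two {ι : Type*} [Fintype ι] [DecidableEq ι]
    {c : ι → ℤ} {i : ι} (hci : c i = 1) (hsum : ∑ k, c k ^ 2 = 2) :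
    ∃ j ≠ i, (c j = 1 ∨ c j = -1) ∧ c = Pi.single i 1 + Pi.single j (c j) := by
  have hrest : ∑ k ∈ univ.erase i, c k ^ 2 = 1 := by
    have := add_sum_erase univ (fun k => c k ^ 2) (mem_univ i)
    rw [hci] at this
    omega
  obtain ⟨j, hj, hcj, hzero⟩ := exists_sq_eq_one_of_sum_sq_eq_one hrest
  have hji : j ≠ i := ne_of_mem_erase hj
  refine ⟨j, hji, sq_eq_one_iff.mp hcj, funext fun k => ?_⟩
  by_cases hki : k = i
  · subst hki; simp [hci, hji.symm]
  by_cases hkj : k = j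
  · subst hkj; simp [hki]
  simp [hki, hkj, hzero k (mem_erase.mpr ⟨hki, mem_univ k⟩) hkj]

lemma exists_two_smul_eq_single_add_smul_single {ι : Type*} [Fintype ι] [DecidableEq ι]
    {p : ι → ℝ} {i : ι} (hint : ∀ k, ∃ z : ℤ, ((2 : ℝ) • p) k = z) (hnorm : p ⬝ᵥ p = p i)
    (hpos : 0 < p i) (hlt : p i < 1) :
    ∃ j ≠ i, ∃ ε : ℝ, (ε = 1 ∨ ε = -1) ∧ (2 : ℝ) • p = Pi.single i 1 + ε • Pi.single j 1 := by
  choose c hc using hint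
  simp only [Pi.smul_apply, smul_eq_mul] at hc
  have hci : c i = 1 := by
    have h0 : (0 : ℝ) < c i := by linarith [hc i]
    have h2 : (c i : ℝ) < 2 := by linarith [hc i]
    have : 0 < c i ∧ c i < 2 := ⟨by exact_mod_cast h0, by exact_mod_cast h2⟩
    omega
  have hsum : ∑ k, c k ^ 2 = 2 := by
    have : ∑ k, (c k : ℝ) ^ 2 = 2 := by
      calc ∑ k, (c k : ℝ) ^ 2 = 4 * (p ⬝ᵥ p) := by
            simp only [← hc, dotProduct, mul_sum]; exact sum_congr rfl fun k _ => by ring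
        _ = 2 := by rw [hnorm]; linarith [hc i, show (c i : ℝ) = 1 by exact_mod_cast hci]
    exact_mod_cast this
  obtain ⟨j, hji, hcj, hc_eq⟩ := exists_eq_single_add_single_of_sum_sq_eq_two hci hsum
  refine ⟨j, hji, c j, by exact_mod_cast hcj, funext fun k => ?_⟩
  rw [Pi.smul_apply, smul_eq_mul, hc k, hc_eq]
  by_cases hki : k = i
  · subst hki; simp [hji.symm]
  by_cases hkj : k = j
  · subst hkj; simp [hki]
  simp [hki, hkj]

section CutSpace

variable (D : Matrix (Fin m) (Fin n) ℝ)

lemma mem_cycleSpace_iff {x : Fin n → ℝ} : x ∈ cycleSpace D ↔ D *ᵥ x = 0 := Iff.rfl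

lemma exists_mem_cutSpace_sub_mem_cycleSpace (v : Fin n → ℝ) :
    ∃ p ∈ cutSpace D, v - p ∈ cycleSpace D := by
  let Z : Submodule ℝ (EuclideanSpace ℝ (Fin n)) :=
    (cycleSpace D).comap (WithLp.linearEquiv 2 ℝ (Fin n → ℝ)).toLinearMap
  let v' : EuclideanSpace ℝ (Fin n) := WithLp.toLp 2 v
  have hvp : v' - Zᗮ.starProjection v' ∈ Z := by
    simpa only [Submodule.orthogonal_orthogonal] using
      Submodule.sub_starProjection_mem_orthogonal (K := Zᗮ) v'
  refine ⟨WithLp.ofLp (Zᗮ.starProjection v'), fun z hz => ?_, hvp⟩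
  have := Zᗮ.starProjection_apply_mem v' (WithLp.toLp 2 z) hz
  rw [real_inner_comm] at this
  simpa [PiLp.inner_apply, dotProduct, mul_comm] using this

lemma apply_eq_mul_of_mulVec_single_eq_smul {p : Fin n → ℝ} (hp : p ∈ cutSpace D)
    {i k : Fin n} {ε : ℝ} (h : D *ᵥ Pi.single i 1 = ε • D *ᵥ Pi.single k 1) :
    p i = ε * p k := by
  have hcycle : Pi.single i 1 - ε • Pi.single k 1 ∈ cycleSpace D := by
    rw [mem_cycleSpace_iff, mulVec_sub, mulVec_smul, h, sub_self]
  have := hp _ hcycle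
  rw [dotProduct_sub, dotProduct_smul, dotProduct_single, dotProduct_single, smul_eq_mul,
    sub_eq_zero] at this
  simpa [mul_comm] using this

def IsCutComponent (i : Fin n) (p : Fin n → ℝ) : Prop :=
  p ∈ cutSpace D ∧ Pi.single i 1 - p ∈ cycleSpace D

lemma exists_isCutComponent (i : Fin n) : ∃ p, IsCutComponent D i p :=
  exists_mem_cutSpace_sub_mem_cycleSpace D _

namespace IsCutComponent

variable {D} {i : Fin n} {p : Fin n → ℝ}

lemma dotProduct_eq_apply (hp : IsCutComponent D i p) {b : Fin n → ℝ} (hb : b ∈ cutSpace D) :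
    p ⬝ᵥ b = b i := by
  have h := hb _ hp.2
  rw [dotProduct_sub, dotProduct_single, mul_one, sub_eq_zero] at h
  rw [dotProduct_comm, h]

lemma mem_dualLattice (hp : IsCutComponent D i p) : p ∈ dualLattice D :=
  ⟨hp.1, fun b hb => by simpa only [hp.dotProduct_eq_apply hb.1] using hb.2 i⟩

lemma dotProduct_self (hp : IsCutComponent D i p) : p ⬝ᵥ p = p i := hp.dotProduct_eq_apply hp.1

lemma mulVec_eq (hp : IsCutComponent D i p) : D *ᵥ p = D *ᵥ Pi.single i 1 := by
  have := (mem_cycleSpace_iff D).mp hp.2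
  rwa [mulVec_sub, sub_eq_zero, eq_comm] at this

lemma apply_pos (hp : IsCutComponent D i p) (hloop : D *ᵥ Pi.single i 1 ≠ 0) : 0 < p i := by
  have hp0 : p ≠ 0 := by
    rintro rfl
    exact hloop (by simpa using hp.mulVec_eq.symm)
  rw [← hp.dotProduct_self]
  exact dotProduct_self_star_pos_iff.mpr hp0

lemma apply_lt_one (hp : IsCutComponent D i p) (hcoloop : Pi.single i 1 ∉ cutSpace D) :
    p i < 1 := by
  have hq0 : Pi.single i 1 - p ≠ 0 := fun h => hcoloop (sub_eq_zero.mp h ▸ hp.1)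
  have hq : (Pi.single i 1 - p) ⬝ᵥ (Pi.single i 1 - p) = 1 - p i := by
    rw [sub_dotProduct, dotProduct_sub, dotProduct_sub, dotProduct_single, dotProduct_single,
      single_dotProduct, Pi.single_eq_same, hp.dotProduct_self]
    ring
  have := dotProduct_self_star_pos_iff.mpr hq0
  simp only [star_trivial] at this
  linarith

end IsCutComponent

end CutSpace

theorem stmt9_general (m n : ℕ) (D : Matrix (Fin m) (Fin n) ℝ)
    (hloop : ∀ i : Fin n, D.mulVec (Pi.single i (1 : ℝ)) ≠ 0)
    (hcoloop : ∀ i : Fin n, Pi.single i (1 : ℝ) ∉ cutSpace D)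
    (hexp : ∀ x ∈ dualLattice D, (2 : ℝ) • x ∈ cutLattice D) :
    ∀ i : Fin n, ∃! j : Fin n, j ≠ i ∧
      (D.mulVec (Pi.single i (1 : ℝ)) = D.mulVec (Pi.single j (1 : ℝ)) ∨
       D.mulVec (Pi.single i (1 : ℝ)) = -D.mulVec (Pi.single j (1 : ℝ))) := by
  intro i
  obtain ⟨p, hp⟩ := exists_isCutComponent D i
  have hpos := hp.apply_pos (hloop i)
  obtain ⟨j, hji, ε, hε, h2p⟩ := exists_two_smul_eq_single_add_smul_single
    (hexp p hp.mem_dualLattice).2 hp.dotProduct_self hpos (hp.apply_lt_one (hcoloop i))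
  have hcol : D *ᵥ Pi.single i 1 = ε • D *ᵥ Pi.single j 1 := by
    have := congrArg (D *ᵥ ·) h2p
    simp only [mulVec_smul, mulVec_add, hp.mulVec_eq] at this
    linear_combination (norm := module) this
  refine ⟨j, ⟨hji, ?_⟩, fun k ⟨hki, hk⟩ => ?_⟩
  · rcases hε with rfl | rfl
    · exact .inl (by simpa using hcol)
    · exact .inr (by simpa using hcol)
  have hpk : p k ≠ 0 := by
    obtain ⟨δ, hδ⟩ : ∃ δ : ℝ, D *ᵥ Pi.single i 1 = δ • D *ᵥ Pi.single k 1 :=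
      hk.elim (fun h => ⟨1, by simpa using h⟩) (fun h => ⟨-1, by simpa using h⟩)
    intro h0
    have := apply_eq_mul_of_mulVec_single_eq_smul D hp.1 hδ
    rw [h0, mul_zero] at this
    exact hpos.ne' this
  by_contra hkj
  have := congrFun h2p k
  simp [hki, hkj, hpk] at this

/-- under the hypotheses of Statement 7, the columns of `D` pair up, equal up to
sign: for every `i` there is a unique `j ≠ i` with `De_i = De_j` or `De_i = -De_j`. -/
theorem stmt9 (m n : ℕ) (D : Matrix (Fin m) (Fin n) ℝ)
    (hTU : D.IsTotallyUnimodular)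
    (hloop : ∀ i : Fin n, D.mulVec (Pi.single i (1 : ℝ)) ≠ 0)
    (hcoloop : ∀ i : Fin n, Pi.single i (1 : ℝ) ∉ cutSpace D)
    (hexp : ∀ x ∈ dualLattice D, (2 : ℝ) • x ∈ cutLattice D) :
    ∀ i : Fin n, ∃! j : Fin n, j ≠ i ∧
      (D.mulVec (Pi.single i (1 : ℝ)) = D.mulVec (Pi.single j (1 : ℝ)) ∨
       D.mulVec (Pi.single i (1 : ℝ)) = -D.mulVec (Pi.single j (1 : ℝ))) :=
  stmt9_general m n D hloop hcoloop hexp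
end

section
/- Let D be a real m×n matrix and let P be the orthogonal projection of ℝⁿ onto the cut space B. Then the map c ↦ Pc induces a well-defined isomorphism of abelian groups P_* : ℤⁿ/(Z_I + B_I) → P(ℤⁿ)/B_I sending the coset [c] to the coset [Pc], where P(ℤⁿ) denotes the image of the integer lattice ℤⁿ under P (a subgroup of B containing B_I). -/
open Matrix

variable {m n : ℕ}

/-- The integer lattice `ℤⁿ` inside `ℝⁿ`, as an additive subgroup. -/
def intLattice (n : ℕ) : AddSubgroup (Fin n → ℝ) :=
  AddSubgroup.pi Set.univ fun _ => (Int.castAddHom ℝ).range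

/-- The cycle lattice `Z_I = Z ∩ ℤⁿ`, as an additive subgroup. -/
def cycleLatticeSub (D : Matrix (Fin m) (Fin n) ℝ) : AddSubgroup (Fin n → ℝ) :=
  (cycleSpace D).toAddSubgroup ⊓ intLattice n

/-- The cut lattice `B_I = B ∩ ℤⁿ`, as an additive subgroup. -/
def cutLatticeSub (D : Matrix (Fin m) (Fin n) ℝ) : AddSubgroup (Fin n → ℝ) :=
  (cutSpace D).toAddSubgroup ⊓ intLattice n

/-- The image `P(ℤⁿ)` of the integer lattice under `P`, as an additive subgroup. -/
def imageLattice (P : Matrix (Fin n) (Fin n) ℝ) : AddSubgroup (Fin n → ℝ) :=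
  AddSubgroup.map P.mulVecLin.toAddMonoidHom (intLattice n)

/-- the map `c ↦ Pc` induces a well-defined isomorphism
`ℤⁿ/(Z_I + B_I) ≃ P(ℤⁿ)/B_I`, `[c] ↦ [Pc]`. -/
theorem stmt12 (m n : ℕ) (D : Matrix (Fin m) (Fin n) ℝ)
    (P : Matrix (Fin n) (Fin n) ℝ) (hP : IsCutProjection D P) :
    ∃ φ : (intLattice n ⧸ (cycleLatticeSub D ⊔ cutLatticeSub D).addSubgroupOf (intLattice n)) ≃+
          (imageLattice P ⧸ (cutLatticeSub D).addSubgroupOf (imageLattice P)),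
      ∀ c : intLattice n,
        φ (QuotientAddGroup.mk c) =
          QuotientAddGroup.mk (⟨P.mulVec c.1, ⟨c.1, c.2, rfl⟩⟩ : imageLattice P) := by
  classical
  have hZB : ∀ x, x ∈ cycleSpace D → x ∈ cutSpace D → x = 0 := by
    intro x hz hb
    exact dotProduct_self_eq_zero.mp (hb x hz)
  have hPz : ∀ z, z ∈ cycleSpace D → P.mulVec z = 0 := by
    intro z hz
    have h1 := (hP z).1
    have h2 : P.mulVec z ∈ cycleSpace D := by
      have := (cycleSpace D).sub_mem hz (hP z).2
      simpa using this
    exact hZB _ h2 h1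
  have hPb : ∀ b, b ∈ cutSpace D → P.mulVec b = b := by
    intro b hb
    have h2 : b - P.mulVec b ∈ cutSpace D := (cutSpace D).sub_mem hb (hP b).1
    have h3 := hZB _ (hP b).2 h2
    exact (sub_eq_zero.mp h3).symm
  set K := (cutLatticeSub D).addSubgroupOf (imageLattice P)
  let g : intLattice n →+ imageLattice P :=
    { toFun := fun c => ⟨P.mulVec c.1, ⟨c.1, c.2, rfl⟩⟩
      map_zero' := by
        apply Subtype.ext
        simp [Matrix.mulVec_zero]
      map_add' := fun a b => by
        apply Subtype.ext
        simp [Matrix.mulVec_add] }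
  let f := (QuotientAddGroup.mk' K).comp g
  have hf : Function.Surjective f := by
    intro y
    induction y using QuotientAddGroup.induction_on with
    | H y =>
      obtain ⟨c, hc, h⟩ := y.2
      refine ⟨(⟨c, hc⟩ : intLattice n), ?_⟩
      simp only [f, AddMonoidHom.comp_apply, QuotientAddGroup.mk'_apply]
      congr 1
      exact Subtype.ext h
  have hint : ∀ x : Fin n → ℝ, x ∈ intLattice n ↔ ∀ i, ∃ k : ℤ, x i = (k : ℝ) := by
    intro x
    constructor
    · intro hx i
      obtain ⟨k, hk⟩ := hx i trivial
      exact ⟨k, hk.symm⟩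
    · intro hx i _
      obtain ⟨k, hk⟩ := hx i
      exact ⟨k, hk.symm⟩
  have hcut : ∀ x : Fin n → ℝ, x ∈ cutLatticeSub D ↔ x ∈ cutSpace D ∧ x ∈ intLattice n := by
    intro x; exact AddSubgroup.mem_inf
  have hcyc : ∀ x : Fin n → ℝ, x ∈ cycleLatticeSub D ↔ x ∈ cycleSpace D ∧ x ∈ intLattice n := by
    intro x; exact AddSubgroup.mem_inf
  have hker : f.ker = (cycleLatticeSub D ⊔ cutLatticeSub D).addSubgroupOf (intLattice n) := by
    ext c
    simp only [f, K, AddMonoidHom.mem_ker, AddMonoidHom.comp_apply, QuotientAddGroup.mk'_apply,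
      QuotientAddGroup.eq_zero_iff, AddSubgroup.mem_addSubgroupOf]
    have hgc : ((g c : imageLattice P) : Fin n → ℝ) = P.mulVec c.1 := rfl
    rw [hgc]
    constructor
    · intro h
      rw [AddSubgroup.mem_sup]
      refine ⟨c.1 - P.mulVec c.1, ?_, P.mulVec c.1, h, by abel⟩
      rw [hcyc]
      refine ⟨(hP c.1).2, (hint _).mpr fun i => ?_⟩
      obtain ⟨k, hk⟩ := (hint _).mp c.2 i
      obtain ⟨l, hl⟩ := (hint _).mp ((hcut _).mp h).2 i
      refine ⟨k - l, ?_⟩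
      simp [hk, hl]
    · intro h
      rw [AddSubgroup.mem_sup] at h
      obtain ⟨z, hz, b, hb, hzb⟩ := h
      have hb' : P.mulVec c.1 = b := by
        rw [← hzb, Matrix.mulVec_add, hPz z ((hcyc z).mp hz).1, hPb b ((hcut b).mp hb).1, zero_add]
      rw [hb']; exact hb
  refine ⟨(QuotientAddGroup.quotientAddEquivOfEq hker.symm).trans
    (QuotientAddGroup.quotientKerEquivOfSurjective f hf), fun c => ?_⟩
  rfl
end

section
/- Let D be a totally unimodular real m×n matrix such that no index i is a loop (De_i ≠ 0 for every i) and no index i is a coloop (e_i ∉ B for every i), and suppose that 3x ∈ B_I for every x ∈ B_I^#. Then every entry of the orthogonal projection matrix P onto the cut space B lies in {−2/3, −1/3, 0, 1/3, 2/3}; every diagonal entry of P is 1/3 or 2/3; every nonzero off-diagonal entry of P is 1/3 or −1/3; and each row of P has exactly three nonzero entries. -/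
open Matrix

variable {m n : ℕ}

/-!
Since `P` is symmetric and idempotent, row `i` of `P` satisfies `∑ₖ P i k ^ 2 = P i i`. Each
column `P eⱼ` lies in the dual lattice `B_I^#` (for `b ∈ B_I`, `⟨P eⱼ, b⟩ = ⟨eⱼ, P b⟩ = bⱼ`),
so by hypothesis `3 P` is an integer matrix. A loop-free `i` forces `P i i ≠ 0` and a
coloop-free `i` forces `P i i ≠ 1`, so `P i i ∈ {1/3, 2/3}`, and the off-diagonal entries of
row `i` are multiples of `1/3` whose squares add up to `P i i - P i i ^ 2 = 2/9`: exactly two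
of them are `±1/3`, all others vanish.
-/

open Finset

section ThirdIntegralRow

variable {ι : Type*} [Fintype ι] {x : ι → ℝ} {i : ι}

lemma eq_third_or_two_thirds {y : ℝ} (hy : ∃ k : ℤ, 3 * y = k) (h0 : 0 < y) (h1 : y < 1) :
    y = 1 / 3 ∨ y = 2 / 3 := by
  obtain ⟨k, hk⟩ := hy
  have hk0 : 0 < k := by exact_mod_cast (by linarith : (0 : ℝ) < k)
  have hk3 : k < 3 := by exact_mod_cast (by linarith : (k : ℝ) < 3)
  obtain rfl | rfl : k = 1 ∨ k = 2 := by omega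
  · left; push_cast at hk; linarith
  · right; push_cast at hk; linarith

lemma eq_neg_third_or_zero_or_third {y : ℝ} (hy : ∃ k : ℤ, 3 * y = k) (h : y ^ 2 ≤ 2 / 9) :
    y = -(1 / 3) ∨ y = 0 ∨ y = 1 / 3 := by
  obtain ⟨k, hk⟩ := hy
  have hk2 : k ^ 2 ≤ 2 := by
    have : (k : ℝ) ^ 2 = 9 * y ^ 2 := by rw [← hk]; ring
    exact_mod_cast (by linarith : (k : ℝ) ^ 2 ≤ 2)
  have : -1 ≤ k := by nlinarith
  have : k ≤ 1 := by nlinarith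
  obtain rfl | rfl | rfl : k = -1 ∨ k = 0 ∨ k = 1 := by omega
  · left; push_cast at hk; linarith
  · right; left; push_cast at hk; linarith
  · right; right; push_cast at hk; linarith

lemma sq_le_of_sum_sq_eq (hsum : ∑ k, x k ^ 2 = x i) (j : ι) : x j ^ 2 ≤ x i :=
  hsum ▸ single_le_sum (fun k _ => sq_nonneg (x k)) (mem_univ j)

lemma eq_third_or_two_thirds_of_sum_sq_eq (hx : ∃ k : ℤ, 3 * x i = k)
    (hsum : ∑ k, x k ^ 2 = x i) (h0 : x i ≠ 0) (h1 : x i ≠ 1) : x i = 1 / 3 ∨ x i = 2 / 3 := by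
  have hii := sq_le_of_sum_sq_eq hsum i
  have hpos : 0 < x i := lt_of_le_of_ne (by nlinarith) h0.symm
  exact eq_third_or_two_thirds hx hpos (lt_of_le_of_ne (by nlinarith) h1)

variable [DecidableEq ι]

lemma sum_erase_sq_eq_two_ninths (hsum : ∑ k, x k ^ 2 = x i) (hi : x i = 1 / 3 ∨ x i = 2 / 3) :
    ∑ k ∈ univ.erase i, x k ^ 2 = 2 / 9 := by
  rw [sum_erase_eq_sub (mem_univ i), hsum]
  rcases hi with h | h <;> rw [h] <;> norm_num

lemma eq_neg_third_or_zero_or_third_of_ne (hx : ∀ k, ∃ z : ℤ, 3 * x k = z)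
    (hoff : ∑ k ∈ univ.erase i, x k ^ 2 = 2 / 9) {j : ι} (hj : j ≠ i) :
    x j = -(1 / 3) ∨ x j = 0 ∨ x j = 1 / 3 :=
  eq_neg_third_or_zero_or_third (hx j) <|
    hoff ▸ single_le_sum (fun k _ => sq_nonneg (x k)) (mem_erase.2 ⟨hj, mem_univ j⟩)

lemma card_support_eq_three (hx : ∀ k, ∃ z : ℤ, 3 * x k = z)
    (hoff : ∑ k ∈ univ.erase i, x k ^ 2 = 2 / 9) (h0 : x i ≠ 0) :
    #{j | x j ≠ 0} = 3 := by
  have hsq : ∀ k ∈ univ.erase i, x k ^ 2 = if x k ≠ 0 then 1 / 9 else 0 := fun k hk => by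
    rcases eq_neg_third_or_zero_or_third_of_ne hx hoff (mem_erase.1 hk).1 with h | h | h <;>
      norm_num [h]
  rw [sum_congr rfl hsq, sum_ite, sum_const_zero, sum_const, nsmul_eq_mul] at hoff
  have hcard : #((univ.erase i).filter fun j => x j ≠ 0) = 2 := by
    exact_mod_cast (by linarith : (#((univ.erase i).filter fun j => x j ≠ 0) : ℝ) = 2)
  rw [filter_erase, card_erase_of_mem (by simpa using h0)] at hcard
  omega

end ThirdIntegralRow

lemma single_one_dotProduct_mulVec_single_one {R ι : Type*} [CommSemiring R] [Fintype ι]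
    [DecidableEq ι] (M : Matrix ι ι R) (i : ι) : Pi.single i 1 ⬝ᵥ M *ᵥ Pi.single i 1 = M i i := by
  simp

namespace IsCutProjection

variable {D : Matrix (Fin m) (Fin n) ℝ} {P : Matrix (Fin n) (Fin n) ℝ}

lemma mulVec_eq_self (hP : IsCutProjection D P) {b : Fin n → ℝ} (hb : b ∈ cutSpace D) :
    P *ᵥ b = b := by
  have hz := (hP b).2
  have h : (b - P *ᵥ b) ⬝ᵥ (b - P *ᵥ b) = 0 := by
    rw [sub_dotProduct, hb _ hz, (hP b).1 _ hz, sub_zero]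
  exact (sub_eq_zero.1 (dotProduct_self_eq_zero.1 h)).symm

lemma mulVec_dotProduct (hP : IsCutProjection D P) (x y : Fin n → ℝ) :
    P *ᵥ x ⬝ᵥ y = x ⬝ᵥ P *ᵥ y := by
  have h1 : P *ᵥ x ⬝ᵥ (y - P *ᵥ y) = 0 := (hP x).1 _ (hP y).2
  have h2 : P *ᵥ y ⬝ᵥ (x - P *ᵥ x) = 0 := (hP y).1 _ (hP x).2
  rw [dotProduct_sub] at h1 h2
  rw [dotProduct_comm (P *ᵥ y), dotProduct_comm (P *ᵥ y)] at h2
  linarith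

lemma apply_comm (hP : IsCutProjection D P) (i j : Fin n) : P i j = P j i := by
  simpa [mulVec_single_one] using hP.mulVec_dotProduct (Pi.single j 1) (Pi.single i 1)

lemma mulVec_dotProduct_mulVec (hP : IsCutProjection D P) (x : Fin n → ℝ) :
    P *ᵥ x ⬝ᵥ P *ᵥ x = x ⬝ᵥ P *ᵥ x := by
  rw [hP.mulVec_dotProduct, hP.mulVec_eq_self (hP x).1]

lemma sub_mulVec_dotProduct_self (hP : IsCutProjection D P) (x : Fin n → ℝ) :
    (x - P *ᵥ x) ⬝ᵥ (x - P *ᵥ x) = x ⬝ᵥ x - x ⬝ᵥ P *ᵥ x := by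
  rw [sub_dotProduct, (hP x).1 _ (hP x).2, sub_zero, dotProduct_sub]

lemma sum_sq_row (hP : IsCutProjection D P) (i : Fin n) : ∑ k, P i k ^ 2 = P i i := by
  rw [← single_one_dotProduct_mulVec_single_one P, ← hP.mulVec_dotProduct_mulVec]
  simp [dotProduct, hP.apply_comm _ i, sq]

lemma diag_ne_zero (hP : IsCutProjection D P) {i : Fin n} (hloop : D *ᵥ Pi.single i 1 ≠ 0) :
    P i i ≠ 0 := by
  intro h
  have hcol : P *ᵥ Pi.single i 1 = 0 := dotProduct_self_eq_zero.1 <| by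
    rw [hP.mulVec_dotProduct_mulVec, single_one_dotProduct_mulVec_single_one, h]
  have hcycle := (hP (Pi.single i 1)).2
  rw [hcol, sub_zero] at hcycle
  exact hloop hcycle

lemma diag_ne_one (hP : IsCutProjection D P) {i : Fin n}
    (hcoloop : Pi.single i 1 ∉ cutSpace D) : P i i ≠ 1 := by
  intro h
  have hfix : Pi.single i 1 - P *ᵥ Pi.single i 1 = 0 := dotProduct_self_eq_zero.1 <| by
    rw [hP.sub_mulVec_dotProduct_self, single_one_dotProduct_mulVec_single_one, h]
    simp
  exact hcoloop (sub_eq_zero.1 hfix ▸ (hP _).1)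

lemma col_mem_dualLattice (hP : IsCutProjection D P) (j : Fin n) :
    P *ᵥ Pi.single j 1 ∈ dualLattice D := by
  refine ⟨(hP _).1, fun b hb => ?_⟩
  rw [hP.mulVec_dotProduct, hP.mulVec_eq_self hb.1, single_dotProduct, one_mul]
  exact hb.2 j

lemma exists_int_three_mul (hP : IsCutProjection D P)
    (hexp : ∀ x ∈ dualLattice D, (3 : ℝ) • x ∈ cutLattice D) (i j : Fin n) :
    ∃ k : ℤ, 3 * P i j = k := by
  simpa [mulVec_single_one] using (hexp _ (hP.col_mem_dualLattice j)).2 i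

end IsCutProjection

open Finset in
theorem stmt16_general (m n : ℕ) (D : Matrix (Fin m) (Fin n) ℝ)
    (hloop : ∀ i : Fin n, D.mulVec (Pi.single i (1 : ℝ)) ≠ 0)
    (hcoloop : ∀ i : Fin n, Pi.single i (1 : ℝ) ∉ cutSpace D)
    (hexp : ∀ x ∈ dualLattice D, (3 : ℝ) • x ∈ cutLattice D)
    (P : Matrix (Fin n) (Fin n) ℝ) (hP : IsCutProjection D P) :
    (∀ i j : Fin n,
        P i j = -(2/3) ∨ P i j = -(1/3) ∨ P i j = 0 ∨ P i j = 1/3 ∨ P i j = 2/3) ∧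
    (∀ i : Fin n, P i i = 1/3 ∨ P i i = 2/3) ∧
    (∀ i j : Fin n, i ≠ j → P i j ≠ 0 → P i j = 1/3 ∨ P i j = -(1/3)) ∧
    (∀ i : Fin n, (univ.filter fun j => P i j ≠ 0).card = 3) := by
  have hintegral := hP.exists_int_three_mul hexp
  have hdiag (i : Fin n) : P i i = 1 / 3 ∨ P i i = 2 / 3 :=
    eq_third_or_two_thirds_of_sum_sq_eq (hintegral i i) (hP.sum_sq_row i)
      (hP.diag_ne_zero (hloop i)) (hP.diag_ne_one (hcoloop i))
  have hoff (i : Fin n) := sum_erase_sq_eq_two_ninths (hP.sum_sq_row i) (hdiag i)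
  have hentry (i j : Fin n) (hij : i ≠ j) :=
    eq_neg_third_or_zero_or_third_of_ne (hintegral i) (hoff i) hij.symm
  refine ⟨fun i j => ?_, hdiag, fun i j hij hne => ?_, fun i => ?_⟩
  · rcases eq_or_ne i j with rfl | hij
    · rcases hdiag i with h | h <;> simp [h]
    · rcases hentry i j hij with h | h | h <;> simp [h]
  · rcases hentry i j hij with h | h | h
    exacts [Or.inr h, absurd h hne, Or.inl h]
  · exact card_support_eq_three (hintegral i) (hoff i) (hP.diag_ne_zero (hloop i))

open Finset in
/-- if `D` is totally unimodular with no loops and no coloops, and `3x ∈ B_I` for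
all `x ∈ B_I^#`, then the entries of the projection `P` lie in `{±2/3, ±1/3, 0}`, the diagonal
entries are `1/3` or `2/3`, the nonzero off-diagonal entries are `±1/3`, and each row of `P`
has exactly three nonzero entries. -/
theorem stmt16 (m n : ℕ) (D : Matrix (Fin m) (Fin n) ℝ)
    (hTU : D.IsTotallyUnimodular)
    (hloop : ∀ i : Fin n, D.mulVec (Pi.single i (1 : ℝ)) ≠ 0)
    (hcoloop : ∀ i : Fin n, Pi.single i (1 : ℝ) ∉ cutSpace D)
    (hexp : ∀ x ∈ dualLattice D, (3 : ℝ) • x ∈ cutLattice D)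
    (P : Matrix (Fin n) (Fin n) ℝ) (hP : IsCutProjection D P) :
    (∀ i j : Fin n,
        P i j = -(2/3) ∨ P i j = -(1/3) ∨ P i j = 0 ∨ P i j = 1/3 ∨ P i j = 2/3) ∧
    (∀ i : Fin n, P i i = 1/3 ∨ P i i = 2/3) ∧
    (∀ i j : Fin n, i ≠ j → P i j ≠ 0 → P i j = 1/3 ∨ P i j = -(1/3)) ∧
    (∀ i : Fin n, (univ.filter fun j => P i j ≠ 0).card = 3) :=
  stmt16_general m n D hloop hcoloop hexp P hP
end
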